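/- Let n ∈ ℕ with n ≥ 1, let μ be the product measure on ℝ^n whose coordinates are i.i.d. standard Gaussian N(0,1), let v ∈ ℝ^n be nonzero, and let p ∈ (0,1). Define w*(ω) = 1 if ⟨v, ω⟩ ≥ −‖v‖₂ · Φ⁻¹(p) and w*(ω) = 0 otherwise. If w : ℝ^n → [0,1] is measurable with ∫ w dμ = p and μ({ω : w(ω) ≠ w*(ω)}) > 0, then ∫ ⟨v, ω⟩ · w(ω) dμ(ω) < ∫ ⟨v, ω⟩ · w*(ω) dμ(ω). -/

import Mathlib

open MeasureTheory ProbabilityTheory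
open scoped RealInnerProductSpace

/-- The cumulative distribution function `Φ` of the standard Gaussian measure `N(0,1)` on `ℝ`. -/
noncomputable def Phi (x : ℝ) : ℝ := ((gaussianReal 0 1) (Set.Iic x)).toReal

/-- The inverse `Φ⁻¹` of the standard Gaussian CDF on `(0,1)`. -/
noncomputable def PhiInv (p : ℝ) : ℝ := Function.invFun Phi p

open Set

/-!
Bathtub principle: for `g := (⟪v, ·⟫ - t) * (w* - w)` with `t = -‖v‖ Φ⁻¹(p)`, the two factors
have the same sign everywhere, so `g ≥ 0`; since `w` and `w*` have the same mass `p`, `∫ g` is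
exactly the gap between the two correlations. The law of `⟪v, ·⟫` is `N(0, ‖v‖²)`, which has no
atoms, so `{w ≠ w*}` lies in the support of `g` up to a null set and the gap is strictly positive.
-/

section Bathtub

variable {α : Type*} {f w : α → ℝ} {t : ℝ}

lemma mul_indicator_setOf_le_sub_nonneg {ω : α} (hw : w ω ∈ Icc 0 1) :
    0 ≤ (f ω - t) * ({ω | t ≤ f ω}.indicator 1 ω - w ω) := by
  by_cases h : t ≤ f ω
  · simp only [indicator_of_mem (show ω ∈ {ω | t ≤ f ω} from h), Pi.one_apply]
    exact mul_nonneg (sub_nonneg.2 h) (sub_nonneg.2 hw.2)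
  · simp only [indicator_of_notMem (show ω ∉ {ω | t ≤ f ω} from h)]
    exact mul_nonneg_of_nonpos_of_nonpos (by linarith [not_le.1 h]) (by linarith [hw.1])

lemma setOf_ne_subset_support_sub_mul_sub_union {u : α → ℝ} :
    {ω | w ω ≠ u ω} ⊆ Function.support (fun ω => (f ω - t) * (u ω - w ω)) ∪ {ω | f ω = t} :=
  fun ω hω => (em (f ω = t)).symm.imp
    (fun hft => mul_ne_zero (sub_ne_zero.2 hft) (sub_ne_zero.2 (Ne.symm hω))) id

theorem integral_mul_lt_integral_mul_indicator_setOf_le [MeasurableSpace α] {μ : Measure α}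
    [IsFiniteMeasure μ] (hf : Integrable f μ) (hfm : Measurable f)
    (hw : AEStronglyMeasurable w μ) (hw01 : ∀ ω, w ω ∈ Icc 0 1)
    (hmass : ∫ ω, w ω ∂μ = μ.real {ω | t ≤ f ω}) (hatom : μ {ω | f ω = t} = 0)
    (hne : 0 < μ {ω | w ω ≠ {ω | t ≤ f ω}.indicator 1 ω}) :
    ∫ ω, f ω * w ω ∂μ < ∫ ω, f ω * {ω | t ≤ f ω}.indicator 1 ω ∂μ := by
  set s := {ω | t ≤ f ω}
  have hs : MeasurableSet s := measurableSet_le measurable_const hfm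
  have hw_bdd : ∀ ω, ‖w ω‖ ≤ 1 := fun ω => (Real.norm_of_nonneg (hw01 ω).1).trans_le (hw01 ω).2
  have hind_bdd : ∀ ω, ‖s.indicator (1 : α → ℝ) ω‖ ≤ 1 := fun ω => by
    rw [indicator_apply]; split_ifs <;> simp
  have hw_int : Integrable w μ := (integrable_const 1).mono' hw (ae_of_all _ hw_bdd)
  have hind_int : Integrable (s.indicator 1) μ := (integrable_const (1 : ℝ)).indicator hs
  have hfw_int : Integrable (fun ω => f ω * w ω) μ := hf.mul_bdd hw (ae_of_all _ hw_bdd)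
  have hfind_int : Integrable (fun ω => f ω * s.indicator 1 ω) μ :=
    hf.mul_bdd hind_int.aestronglyMeasurable (ae_of_all _ hind_bdd)
  have ht_int : Integrable (fun ω => t * (s.indicator 1 ω - w ω)) μ :=
    (hind_int.sub hw_int).const_mul t
  set g := fun ω => (f ω - t) * (s.indicator 1 ω - w ω)
  have hg : g = fun ω => (f ω * s.indicator 1 ω - f ω * w ω) - t * (s.indicator 1 ω - w ω) := by
    ext ω; ring
  have hg_int : Integrable g μ := hg ▸ (hfind_int.sub hfw_int).sub ht_int
  -- the mass constraint kills the `t`-part of `g`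
  have hg_integral : ∫ ω, g ω ∂μ = ∫ ω, f ω * s.indicator 1 ω ∂μ - ∫ ω, f ω * w ω ∂μ := by
    rw [hg, integral_sub (f := fun ω => f ω * s.indicator 1 ω - f ω * w ω)
      (hfind_int.sub hfw_int) ht_int, integral_sub hfind_int hfw_int, integral_const_mul,
      integral_sub hind_int hw_int, integral_indicator_one hs, hmass, sub_self, mul_zero,
      sub_zero]
  have hsupp : 0 < μ (Function.support g) := calc
    0 < μ {ω | w ω ≠ s.indicator 1 ω} := hne
    _ ≤ μ (Function.support g) + μ {ω | f ω = t} :=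
      (measure_mono setOf_ne_subset_support_sub_mul_sub_union).trans (measure_union_le _ _)
    _ = μ (Function.support g) := by rw [hatom, add_zero]
  have hg_pos : 0 < ∫ ω, g ω ∂μ :=
    (integral_pos_iff_support_of_nonneg
      (fun ω => mul_indicator_setOf_le_sub_nonneg (hw01 ω)) hg_int).2 hsupp
  linarith

end Bathtub

theorem StieltjesFunction.continuous_of_measure_singleton (f : StieltjesFunction ℝ)
    (h : ∀ a, f.measure {a} = 0) : Continuous f := by
  refine continuous_iff_continuousAt.2 fun a => ?_
  rw [f.mono.continuousAt_iff_leftLim_eq_rightLim, f.rightLim_eq]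
  have hjump := f.measure_singleton a
  rw [h a, eq_comm, ENNReal.ofReal_eq_zero, sub_nonpos] at hjump
  exact le_antisymm (f.mono.leftLim_le le_rfl) hjump

lemma continuous_cdf (μ : Measure ℝ) [IsProbabilityMeasure μ] [NullSingletonClass μ] :
    Continuous (cdf μ) :=
  (cdf μ).continuous_of_measure_singleton fun a => by simp [measure_cdf]

lemma Ioo_subset_range_cdf (μ : Measure ℝ) [IsProbabilityMeasure μ] [NullSingletonClass μ] :
    Ioo 0 1 ⊆ range (cdf μ) := fun _ ⟨hp0, hp1⟩ =>
  mem_range_of_exists_le_of_exists_ge (continuous_cdf μ)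
    ((tendsto_cdf_atBot μ).eventually (eventually_le_nhds hp0)).exists
    ((tendsto_cdf_atTop μ).eventually (eventually_ge_nhds hp1)).exists

lemma Phi_eq_cdf : Phi = cdf (gaussianReal 0 1) := by
  ext x; rw [cdf_eq_real]; rfl

lemma Phi_PhiInv {p : ℝ} (hp : p ∈ Ioo 0 1) : Phi (PhiInv p) = p :=
  have := nullSingletonClass_gaussianReal (μ := 0) one_ne_zero
  Function.invFun_eq (Phi_eq_cdf ▸ Ioo_subset_range_cdf _ hp)

section StdGaussian

variable {E : Type*} [NormedAddCommGroup E] [InnerProductSpace ℝ E] [FiniteDimensional ℝ E]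
  [MeasurableSpace E] [BorelSpace E]

lemma map_inner_stdGaussian (v : E) :
    (stdGaussian E).map (⟪v, ·⟫) = gaussianReal 0 (‖v‖₊ ^ 2) := by
  have h := IsGaussian.map_eq_gaussianReal (μ := stdGaussian E) (innerSL ℝ v)
  rw [integral_strongDual_stdGaussian, variance_dual_stdGaussian, innerSL_apply_norm] at h
  convert h using 2
  · ext; simp
  · rw [← coe_nnnorm, ← NNReal.coe_pow, Real.toNNReal_coe]

lemma stdGaussian_setOf_inner_eq {v : E} (hv : v ≠ 0) (t : ℝ) :
    stdGaussian E {ω | ⟪v, ω⟫ = t} = 0 := by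
  have := nullSingletonClass_gaussianReal (μ := 0) (v := ‖v‖₊ ^ 2) (by simpa using hv)
  rw [← map_inner_stdGaussian] at this
  rw [← measure_singleton (μ := (stdGaussian E).map (⟪v, ·⟫)) t,
    Measure.map_apply (by fun_prop) (measurableSet_singleton t)]
  rfl

lemma stdGaussian_real_setOf_le_inner {v : E} (hv : v ≠ 0) (x : ℝ) :
    (stdGaussian E).real {ω | -‖v‖ * x ≤ ⟪v, ω⟫} = Phi x := by
  have hlaw : (stdGaussian E).map (⟪v, ·⟫) = (gaussianReal 0 1).map (-‖v‖ * ·) := by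
    rw [map_inner_stdGaussian, gaussianReal_map_const_mul, mul_zero, mul_one]
    congr 1; ext; simp
  have hpre : (-‖v‖ * ·) ⁻¹' Ici (-‖v‖ * x) = Iic x := by
    ext y
    simp [mul_le_mul_iff_of_pos_left (norm_pos_iff.2 hv)]
  rw [measureReal_def, show {ω | -‖v‖ * x ≤ ⟪v, ω⟫} = (⟪v, ·⟫) ⁻¹' Ici (-‖v‖ * x) from rfl,
    ← Measure.map_apply (by fun_prop) measurableSet_Ici, hlaw,
    Measure.map_apply (by fun_prop) measurableSet_Ici, hpre]
  rfl

end StdGaussian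

theorem stmt_6_general
    (n : ℕ)
    (μ : Measure (EuclideanSpace ℝ (Fin n)))
    (hμ : μ = Measure.map (MeasurableEquiv.toLp 2 (Fin n → ℝ)) (Measure.pi (fun _ => gaussianReal 0 1)))
    (v : EuclideanSpace ℝ (Fin n)) (hv : v ≠ 0)
    (p : ℝ) (hp : p ∈ Set.Ioo (0 : ℝ) 1)
    (wStar : EuclideanSpace ℝ (Fin n) → ℝ)
    (hwStar : ∀ ω, wStar ω = if -‖v‖ * PhiInv p ≤ ⟪v, ω⟫ then (1 : ℝ) else 0)
    (w : EuclideanSpace ℝ (Fin n) → ℝ) (hw : Measurable w)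
    (hw01 : ∀ ω, w ω ∈ Set.Icc (0 : ℝ) 1)
    (hwp : ∫ ω, w ω ∂μ = p)
    (hne : 0 < μ {ω | w ω ≠ wStar ω}) :
    ∫ ω, ⟪v, ω⟫ * w ω ∂μ < ∫ ω, ⟪v, ω⟫ * wStar ω ∂μ := by
  have hμ_std : μ = stdGaussian (EuclideanSpace ℝ (Fin n)) := hμ.trans map_pi_eq_stdGaussian
  have hwStar_eq : wStar = {ω | -‖v‖ * PhiInv p ≤ ⟪v, ω⟫}.indicator 1 := by
    ext ω; simp [hwStar, indicator_apply]
  subst hμ_std hwStar_eq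
  refine integral_mul_lt_integral_mul_indicator_setOf_le
    (IsGaussian.integrable_dual _ (innerSL ℝ v)) (by fun_prop) hw.aestronglyMeasurable hw01 ?_
    (stdGaussian_setOf_inner_eq hv _) hne
  rw [hwp, stdGaussian_real_setOf_le_inner hv, Phi_PhiInv hp]

/-- **Lemma A.3 (strict optimality)**: the half-space indicator
`w*(ω) = 1_{⟨v,ω⟩ ≥ −‖v‖·Φ⁻¹(p)}` is the unique (up to `μ`-null sets) maximizer of the
linear correlation among measurable `w : ℝⁿ → [0,1]` with Gaussian mean `p`. -/
theorem stmt_6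
    (n : ℕ) (hn : 1 ≤ n)
    (μ : Measure (EuclideanSpace ℝ (Fin n)))
    (hμ : μ = Measure.map (MeasurableEquiv.toLp 2 (Fin n → ℝ)) (Measure.pi (fun _ => gaussianReal 0 1)))
    (v : EuclideanSpace ℝ (Fin n)) (hv : v ≠ 0)
    (p : ℝ) (hp : p ∈ Set.Ioo (0 : ℝ) 1)
    (wStar : EuclideanSpace ℝ (Fin n) → ℝ)
    (hwStar : ∀ ω, wStar ω = if -‖v‖ * PhiInv p ≤ ⟪v, ω⟫ then (1 : ℝ) else 0)
    (w : EuclideanSpace ℝ (Fin n) → ℝ) (hw : Measurable w)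
    (hw01 : ∀ ω, w ω ∈ Set.Icc (0 : ℝ) 1)
    (hwp : ∫ ω, w ω ∂μ = p)
    (hne : 0 < μ {ω | w ω ≠ wStar ω}) :
    ∫ ω, ⟪v, ω⟫ * w ω ∂μ < ∫ ω, ⟪v, ω⟫ * wStar ω ∂μ :=
  stmt_6_general n μ hμ v hv p hp wStar hwStar w hw hw01 hwp hne
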